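/- arXiv:2002.00409 — 2 statements merged into one kernel-verified Lean document; each statement's English description precedes it below -/
import Mathlib

section
/- Let (X,𝓔) be a finitary and metrizable coarse space, let G = G_{X,h_ℝ(X,𝓔)} be the permutation group of the Higson compactification h_ℝ(X,𝓔) of X, and let 𝓔_G be the coarse structure on X generated by the action of G. Then 𝓔 = 𝓔_G. -/
open Set Filter Topology

universe u u₁ u₂ v w

section CoarsePreamble

variable {X : Type u}

/-- An entourage on `X` is a subset of `X × X` containing the diagonal. -/
def IsEntourage (E : Set (X × X)) : Prop := ∀ x : X, (x, x) ∈ E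

/-- Composition `E ∘ F` of two entourages. -/
def entComp (E F : Set (X × X)) : Set (X × X) :=
  {p | ∃ y : X, (p.1, y) ∈ E ∧ (y, p.2) ∈ F}

/-- Inverse `E⁻¹` of an entourage. -/
def entInv (E : Set (X × X)) : Set (X × X) := {p | (p.2, p.1) ∈ E}

/-- The `E`-ball `E[x]` centered at `x`. -/
def entBall (E : Set (X × X)) (x : X) : Set X := {y | (x, y) ∈ E}

/-- A coarse structure on `X`: a family of entourages covering `X × X`, closed under
`E ∘ F⁻¹` up to enlargement, and downward closed among entourages. -/
structure IsCoarseStructure (𝓔 : Set (Set (X × X))) : Prop where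
  ent : ∀ E ∈ 𝓔, IsEntourage E
  cover : ∀ p : X × X, ∃ E ∈ 𝓔, p ∈ E
  comp_subset : ∀ E ∈ 𝓔, ∀ F ∈ 𝓔, ∃ G ∈ 𝓔, entComp E (entInv F) ⊆ G
  downward : ∀ E F : Set (X × X), IsEntourage E → E ⊆ F → F ∈ 𝓔 → E ∈ 𝓔

/-- A set `B` is bounded in the coarse space `(X, 𝓔)` if `B ⊆ E[x]` for some `E ∈ 𝓔`, `x ∈ X`. -/
def IsBoundedSet (𝓔 : Set (Set (X × X))) (B : Set X) : Prop :=
  ∃ E ∈ 𝓔, ∃ x : X, B ⊆ entBall E x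

/-- A coarse structure is finitary if the cardinalities of balls of each entourage
are uniformly finite. -/
def IsFinitaryCoarse (𝓔 : Set (Set (X × X))) : Prop :=
  ∀ E ∈ 𝓔, ∃ n : ℕ, ∀ x : X, (entBall E x).Finite ∧ (entBall E x).ncard ≤ n

/-- `d : X → X → ℝ` is a metric. -/
structure IsMetricOn (d : X → X → ℝ) : Prop where
  refl : ∀ x, d x x = 0
  eq_of : ∀ x y, d x y = 0 → x = y
  symm : ∀ x y, d x y = d y x
  triangle : ∀ x y z, d x z ≤ d x y + d y z

/-- A coarse structure is metrizable if it is the coarse structure of some metric on `X`,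
i.e. consists of all entourages of uniformly bounded `d`-diameter. -/
def IsMetrizableCoarse (𝓔 : Set (Set (X × X))) : Prop :=
  ∃ d : X → X → ℝ, IsMetricOn d ∧
    𝓔 = {E | IsEntourage E ∧ ∃ n : ℕ, ∀ p ∈ E, d p.1 p.2 ≤ (n : ℝ)}

/-- A cellular entourage: a symmetric and transitive entourage (an equivalence relation). -/
def IsCellularEnt (E : Set (X × X)) : Prop :=
  (∀ p : X × X, p ∈ E → (p.2, p.1) ∈ E) ∧
    ∀ x y z : X, (x, y) ∈ E → (y, z) ∈ E → (x, z) ∈ E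

/-- `𝓑` is a base of the coarse structure `𝓔`. -/
def IsCoarseBase (𝓔 𝓑 : Set (Set (X × X))) : Prop :=
  𝓑 ⊆ 𝓔 ∧ ∀ E ∈ 𝓔, ∃ B ∈ 𝓑, E ⊆ B

/-- A coarse structure is cellular if it has a base of cellular entourages. -/
def IsCellularCoarse (𝓔 : Set (Set (X × X))) : Prop :=
  ∃ 𝓑 : Set (Set (X × X)), IsCoarseBase 𝓔 𝓑 ∧ ∀ B ∈ 𝓑, IsCellularEnt B

/-- A subset `D` is `𝓔`-discrete (thin). -/
def IsCoarseDiscrete (𝓔 : Set (Set (X × X))) (D : Set X) : Prop :=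
  ∀ E ∈ 𝓔, ∃ B : Set X, IsBoundedSet 𝓔 B ∧ ∀ x ∈ D \ B, D ∩ entBall E x = {x}

/-- The basic entourage `E_F` determined by a set `F` of permutations of `X`. -/
def permEnt (F : Set (Equiv.Perm X)) : Set (X × X) :=
  {p | p.2 = p.1 ∨ ∃ g ∈ F, p.2 = g p.1}

/-- The coarse structure `𝓔_G` generated by a set (group) `S` of permutations of `X`:
all entourages contained in `E_F` for some finite `F ⊆ S`. -/
def permCoarse (S : Set (Equiv.Perm X)) : Set (Set (X × X)) :=
  {E | IsEntourage E ∧ ∃ F : Finset (Equiv.Perm X),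
    (F : Set (Equiv.Perm X)) ⊆ S ∧ E ⊆ permEnt (F : Set (Equiv.Perm X))}

variable {M : Type v} [MetricSpace M]

/-- A function `φ : X → M` is slowly oscillating. -/
def SlowlyOscillating (𝓔 : Set (Set (X × X))) (φ : X → M) : Prop :=
  ∀ ε : ℝ, 0 < ε → ∀ E ∈ 𝓔, ∃ B : Set X, IsBoundedSet 𝓔 B ∧
    ∀ x : X, x ∉ B → EMetric.diam (φ '' entBall E x) < ENNReal.ofReal ε

/-- Two sets are asymptotically separated if `E[A] ∩ E[B]` is bounded for every `E ∈ 𝓔`. -/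
def AsymptoticallySeparated (𝓔 : Set (Set (X × X))) (A B : Set X) : Prop :=
  ∀ E ∈ 𝓔, IsBoundedSet 𝓔 ((⋃ a ∈ A, entBall E a) ∩ ⋃ b ∈ B, entBall E b)

/-- A coarse space `(X, 𝓔)` is `M`-normal. -/
def IsCoarseNormal (𝓔 : Set (Set (X × X))) (M : Type v) [MetricSpace M] : Prop :=
  ∀ A B : Set X, A.Nonempty → B.Nonempty → Disjoint A B →
    AsymptoticallySeparated 𝓔 A B →
    ∃ φ : X → M, SlowlyOscillating 𝓔 φ ∧
      ∃ ε : ℝ, 0 < ε ∧ ∀ a ∈ A, ∀ b ∈ B, ε ≤ dist (φ a) (φ b)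

/-- `so(X,𝓔;M)`: the bounded slowly oscillating functions `X → M`. -/
def soSet (𝓔 : Set (Set (X × X))) (M : Type v) [MetricSpace M] : Set (X → M) :=
  {φ | Bornology.IsBounded (Set.range φ) ∧ SlowlyOscillating 𝓔 φ}

/-- The canonical map `δ_M : X → M^{so(X,𝓔;M)}`. -/
def deltaMap (𝓔 : Set (Set (X × X))) (M : Type v) [MetricSpace M] :
    X → (↥(soSet 𝓔 M) → M) := fun x f => f.1 x

/-- The underlying set of the `M`-compactification: the closure of `δ_M(X)`. -/
def hCompSet (𝓔 : Set (Set (X × X))) (M : Type v) [MetricSpace M] :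
    Set (↥(soSet 𝓔 M) → M) := closure (Set.range (deltaMap 𝓔 M))

/-- The `M`-compactification `h_M(X,𝓔)` of the coarse space `(X,𝓔)`. -/
abbrev HComp (𝓔 : Set (Set (X × X))) (M : Type v) [MetricSpace M] :=
  ↥(hCompSet 𝓔 M)

/-- The copy of a point `x ∈ X` inside the `M`-compactification. -/
def deltaEmb (𝓔 : Set (Set (X × X))) (M : Type v) [MetricSpace M] (x : X) :
    HComp 𝓔 M := ⟨deltaMap 𝓔 M x, subset_closure (Set.mem_range_self x)⟩

/-- The permutation group `G_{X, h_M(X,𝓔)}` of the `M`-compactification, as a set of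
permutations of `X` (`X` being identified with the set of isolated points of `h_M(X,𝓔)`
via `δ_M`): those permutations induced by homeomorphisms of `h_M(X,𝓔)` fixing all
points outside (the image of) `X`. -/
def hPermGroup (𝓔 : Set (Set (X × X))) (M : Type v) [MetricSpace M] :
    Set (Equiv.Perm X) :=
  {σ | ∃ h : HComp 𝓔 M ≃ₜ HComp 𝓔 M,
    (∀ z : HComp 𝓔 M, z ∉ Set.range (deltaEmb 𝓔 M) → h z = z) ∧
    ∀ x : X, h (deltaEmb 𝓔 M x) = deltaEmb 𝓔 M (σ x)}

end CoarsePreamble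

section TopPreamble

/-- The set of isolated points of a topological space. -/
def isolatedPoints (K : Type w) [TopologicalSpace K] : Set K :=
  {x | IsOpen ({x} : Set K)}

/-- A compactification: a compact Hausdorff space with dense set of isolated points. -/
def IsCompactification (K : Type w) [TopologicalSpace K] : Prop :=
  CompactSpace K ∧ T2Space K ∧ Dense (isolatedPoints K)

/-- The permutation group `G_{K',K}` of a compactification `K`: permutations of the
set `K'` of isolated points induced by homeomorphisms of `K` fixing `K \ K'` pointwise. -/
def homeoPerms (K : Type w) [TopologicalSpace K] :
    Set (Equiv.Perm ↥(isolatedPoints K)) :=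
  {σ | ∃ h : K ≃ₜ K, (∀ z : K, z ∉ isolatedPoints K → h z = z) ∧
    ∀ x : ↥(isolatedPoints K), h x.val = (σ x).val}

/-- The oscillation of `φ : K' → M` at a point `z ∈ K`. -/
noncomputable def oscAt {K : Type w} [TopologicalSpace K] {M : Type v} [MetricSpace M]
    (φ : ↥(isolatedPoints K) → M) (z : K) : ENNReal :=
  ⨅ (O : Set K) (_ : IsOpen O) (_ : z ∈ O),
    EMetric.diam (φ '' (Subtype.val ⁻¹' O))

/-- A compactification `K` is `M`-soft. -/
def IsMSoft (K : Type w) [TopologicalSpace K] (M : Type v) [MetricSpace M] : Prop :=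
  ∀ φ : ↥(isolatedPoints K) → M, Bornology.IsBounded (Set.range φ) →
    (∃ z : K, 0 < oscAt φ z) →
    ∃ σ ∈ homeoPerms K, ∃ ε : ℝ, 0 < ε ∧
      {x : ↥(isolatedPoints K) | ε ≤ dist (φ (σ x)) (φ x)}.Infinite

/-- A compactification `K` is soft. -/
def IsSoft (K : Type w) [TopologicalSpace K] : Prop :=
  ∀ A B : Set ↥(isolatedPoints K), Disjoint A B →
    (closure (Subtype.val '' A) ∩ closure (Subtype.val '' B)).Nonempty →
    ∃ σ ∈ homeoPerms K, {x : ↥(isolatedPoints K) | x ∈ A ∧ σ x ∈ B}.Infinite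

/-- `uc(K',K;M)`: restrictions to the set of isolated points of continuous functions `K → M`. -/
def ucSet (K : Type w) [TopologicalSpace K] (M : Type v) [MetricSpace M] :
    Set (↥(isolatedPoints K) → M) :=
  {φ | ∃ f : K → M, Continuous f ∧ ∀ x : ↥(isolatedPoints K), f x.val = φ x}

/-- `uc(X, h_M(X,𝓔); M)`: restrictions to `X` (via `δ_M`) of continuous functions
`h_M(X,𝓔) → M`. -/
def ucHComp {X : Type u} (𝓔 : Set (Set (X × X))) (M : Type v) [MetricSpace M] :
    Set (X → M) :=
  {φ | ∃ f : HComp 𝓔 M → M, Continuous f ∧ ∀ x : X, f (deltaEmb 𝓔 M x) = φ x}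

/-- The cardinal `Δ`: the smallest cardinality of a base of a cellular finitary coarse
structure on `ω` containing no infinite discrete subsets. -/
noncomputable def smallDeltaCard : Cardinal.{0} :=
  sInf {c : Cardinal.{0} | ∃ 𝓔 : Set (Set (ℕ × ℕ)), IsCoarseStructure 𝓔 ∧
    IsCellularCoarse 𝓔 ∧ IsFinitaryCoarse 𝓔 ∧
    (∀ D : Set ℕ, IsCoarseDiscrete 𝓔 D → D.Finite) ∧
    ∃ 𝓑 : Set (Set (ℕ × ℕ)), IsCoarseBase 𝓔 𝓑 ∧ Cardinal.mk ↥𝓑 = c}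

/-- The cardinal `𝔭`. -/
noncomputable def pCard : Cardinal.{0} :=
  sInf {c : Cardinal.{0} | ∃ F : Set (Set ℕ), (∀ A ∈ F, A.Infinite) ∧
    (∀ S : Finset (Set ℕ), (S : Set (Set ℕ)) ⊆ F → (⋂ A ∈ S, A).Infinite) ∧
    (∀ I : Set ℕ, I.Infinite → ∃ A ∈ F, (I \ A).Infinite) ∧
    Cardinal.mk ↥F = c}

/-- The character `χ(x;K)` of a point. -/
noncomputable def charAt (K : Type w) [TopologicalSpace K] (x : K) : Cardinal.{w} :=
  sInf {c : Cardinal.{w} | ∃ 𝓑 : Set (Set K), (∀ U ∈ 𝓑, IsOpen U ∧ x ∈ U) ∧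
    (∀ V : Set K, IsOpen V → x ∈ V → ∃ U ∈ 𝓑, U ⊆ V) ∧ Cardinal.mk ↥𝓑 = c}

/-- The character `χ(K)` of a space. -/
noncomputable def spaceChar (K : Type w) [TopologicalSpace K] : Cardinal.{w} :=
  ⨆ x : K, charAt K x

/-- A corona: a compact Hausdorff space homeomorphic to the remainder of a
compactification of the countable discrete space `ℕ`. -/
def IsCorona (K : Type w) [TopologicalSpace K] : Prop :=
  CompactSpace K ∧ T2Space K ∧
    ∃ (C : Type w) (_ : TopologicalSpace C), IsCompactification C ∧
      (isolatedPoints C).Infinite ∧ (isolatedPoints C).Countable ∧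
      Nonempty (K ≃ₜ ↥((isolatedPoints C)ᶜ))

/-- A soft corona. -/
def IsSoftCorona (K : Type w) [TopologicalSpace K] : Prop :=
  CompactSpace K ∧ T2Space K ∧
    ∃ (C : Type w) (_ : TopologicalSpace C), IsCompactification C ∧ IsSoft C ∧
      (isolatedPoints C).Infinite ∧ (isolatedPoints C).Countable ∧
      Nonempty (K ≃ₜ ↥((isolatedPoints C)ᶜ))

/-- An `M`-soft corona. -/
def IsMSoftCorona (K : Type w) [TopologicalSpace K] (M : Type v) [MetricSpace M] : Prop :=
  CompactSpace K ∧ T2Space K ∧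
    ∃ (C : Type w) (_ : TopologicalSpace C), IsCompactification C ∧ IsMSoft C M ∧
      (isolatedPoints C).Infinite ∧ (isolatedPoints C).Countable ∧
      Nonempty (K ≃ₜ ↥((isolatedPoints C)ᶜ))

end TopPreamble

/-!
Every permutation `g` of `X` of bounded displacement lies in `G`: precomposition with `g` preserves
slow oscillation, so it induces a homeomorphism of `h_ℝ(X,𝓔)`, and this homeomorphism fixes the
corona because `f ∘ g - f` vanishes at infinity for every slowly oscillating `f`. Since `X` is
uniformly locally finite, a maximal proper edge colouring with finitely many colours of the graph
of pairs at distance at most `n` splits it into finitely many matchings, i.e. involutions of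
bounded displacement; hence `𝓔 ⊆ 𝓔_G`.

Conversely, if `g ∈ G` had unbounded displacement, one could choose points `x_k` such that the sets
`{x_k}` and `{g x_k}` diverge from each other. A slowly oscillating Urysohn function `φ` vanishing
on the first set and equal to `1` on the second then takes both values `0` and `1` at a corona
cluster point `z` of `(x_k)`, because the homeomorphism induced by `g` fixes `z`.
-/

section HigsonCompactification

variable {X : Type u} (𝓔 : Set (Set (X × X)))

theorem isCompact_hCompSet : IsCompact (hCompSet 𝓔 ℝ) := by
  refine (isCompact_univ_pi fun f : soSet 𝓔 ℝ =>
    Metric.isCompact_of_isClosed_isBounded isClosed_closure f.2.1.closure).of_isClosed_subset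
      isClosed_closure (closure_minimal ?_ (isClosed_set_pi fun _ _ => isClosed_closure))
  rintro _ ⟨x, rfl⟩ f -
  exact subset_closure ⟨x, rfl⟩

instance : CompactSpace (HComp 𝓔 ℝ) :=
  isCompact_iff_compactSpace.mp (isCompact_hCompSet 𝓔)

variable {𝓔}

theorem continuous_hComp_apply (f : soSet 𝓔 ℝ) : Continuous fun w : HComp 𝓔 ℝ => w.1 f :=
  (continuous_apply f).comp continuous_subtype_val

theorem MapClusterPt.hComp_apply_eq {ι : Type*} {l : Filter ι} {z : HComp 𝓔 ℝ} {xs : ι → X}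
    (hz : MapClusterPt z l (deltaEmb 𝓔 ℝ ∘ xs)) (f : soSet 𝓔 ℝ) {c : ℝ}
    (hf : ∀ᶠ i in l, f.1 (xs i) = c) : z.1 f = c := by
  by_contra hne
  obtain ⟨i, hi, hfi⟩ := ((hz.continuousAt_comp (continuous_hComp_apply f).continuousAt).frequently
    (isOpen_ne.mem_nhds hne)).and_eventually hf |>.exists
  exact hi hfi

theorem hComp_apply_eq_of_tendsto_cofinite {w : HComp 𝓔 ℝ} (hw : w ∉ range (deltaEmb 𝓔 ℝ))
    {u v : soSet 𝓔 ℝ} (huv : Tendsto (fun x => dist (u.1 x) (v.1 x)) cofinite (𝓝 0)) :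
    w.1 u = w.1 v := by
  refine eq_of_forall_dist_le fun ε hε => ?_
  set S := {x | dist (u.1 x) (v.1 x) ≤ ε}
  have hS : Sᶜ.Finite := (Metric.tendsto_nhds.mp huv ε hε).mono fun x hx => by
    rw [Real.dist_0_eq_abs, abs_of_nonneg dist_nonneg] at hx
    exact hx.le
  have hwS : w.1 ∈ closure (deltaMap 𝓔 ℝ '' S) := by
    have hw' : w.1 ∈ closure (deltaMap 𝓔 ℝ '' S) ∪ deltaMap 𝓔 ℝ '' Sᶜ := by
      rw [← (hS.image _).isClosed.closure_eq, ← closure_union, ← image_union, union_compl_self,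
        image_univ]
      exact w.2
    refine hw'.resolve_right ?_
    rintro ⟨x, -, hx⟩
    exact hw ⟨x, Subtype.ext hx⟩
  refine closure_minimal ?_ (isClosed_le ((continuous_apply u).dist (continuous_apply v))
    continuous_const) hwS
  rintro _ ⟨x, hx, rfl⟩
  exact hx

def soPrecomp (g : X → X) (hg : ∀ f ∈ soSet 𝓔 ℝ, f ∘ g ∈ soSet 𝓔 ℝ)
    (w : soSet 𝓔 ℝ → ℝ) (f : soSet 𝓔 ℝ) : ℝ :=
  w ⟨f.1 ∘ g, hg f.1 f.2⟩

theorem continuous_soPrecomp (g : X → X) (hg : ∀ f ∈ soSet 𝓔 ℝ, f ∘ g ∈ soSet 𝓔 ℝ) :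
    Continuous (soPrecomp g hg) :=
  continuous_pi fun _ => continuous_apply _

theorem mapsTo_soPrecomp_hCompSet (g : X → X) (hg : ∀ f ∈ soSet 𝓔 ℝ, f ∘ g ∈ soSet 𝓔 ℝ) :
    MapsTo (soPrecomp g hg) (hCompSet 𝓔 ℝ) (hCompSet 𝓔 ℝ) := by
  refine MapsTo.closure ?_ (continuous_soPrecomp g hg)
  rintro _ ⟨x, rfl⟩
  exact ⟨g x, rfl⟩

theorem soPrecomp_soPrecomp_symm (g : Equiv.Perm X) (hg : ∀ f ∈ soSet 𝓔 ℝ, f ∘ g ∈ soSet 𝓔 ℝ)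
    (hg' : ∀ f ∈ soSet 𝓔 ℝ, f ∘ g.symm ∈ soSet 𝓔 ℝ) (w : soSet 𝓔 ℝ → ℝ) :
    soPrecomp g hg (soPrecomp g.symm hg' w) = w := by
  funext f
  exact congrArg w (Subtype.ext (funext fun x => congrArg f.1 (g.apply_symm_apply x)))

def hCompHomeomorph (g : Equiv.Perm X) (hg : ∀ f ∈ soSet 𝓔 ℝ, f ∘ g ∈ soSet 𝓔 ℝ)
    (hg' : ∀ f ∈ soSet 𝓔 ℝ, f ∘ g.symm ∈ soSet 𝓔 ℝ) : HComp 𝓔 ℝ ≃ₜ HComp 𝓔 ℝ where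
  toFun w := ⟨soPrecomp g hg w, mapsTo_soPrecomp_hCompSet g hg w.2⟩
  invFun w := ⟨soPrecomp g.symm hg' w, mapsTo_soPrecomp_hCompSet g.symm hg' w.2⟩
  left_inv w := Subtype.ext (soPrecomp_soPrecomp_symm g.symm hg' (by simpa using hg) w)
  right_inv w := Subtype.ext (soPrecomp_soPrecomp_symm g hg hg' w)
  continuous_toFun := ((continuous_soPrecomp g hg).comp continuous_subtype_val).subtype_mk _
  continuous_invFun := ((continuous_soPrecomp g.symm hg').comp continuous_subtype_val).subtype_mk _

theorem mem_hPermGroup_of_tendsto_cofinite (g : Equiv.Perm X)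
    (hg : ∀ f ∈ soSet 𝓔 ℝ, f ∘ g ∈ soSet 𝓔 ℝ) (hg' : ∀ f ∈ soSet 𝓔 ℝ, f ∘ g.symm ∈ soSet 𝓔 ℝ)
    (hfix : ∀ f ∈ soSet 𝓔 ℝ, Tendsto (fun x => dist (f (g x)) (f x)) cofinite (𝓝 0)) :
    g ∈ hPermGroup 𝓔 ℝ := by
  refine ⟨hCompHomeomorph g hg hg', fun w hw => Subtype.ext (funext fun f => ?_), fun x => rfl⟩
  exact hComp_apply_eq_of_tendsto_cofinite hw (u := ⟨_, hg f.1 f.2⟩) (hfix f.1 f.2)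

theorem MapClusterPt.comp_of_mem_hPermGroup {g : Equiv.Perm X} (hg : g ∈ hPermGroup 𝓔 ℝ)
    {ι : Type*} {l : Filter ι} {z : HComp 𝓔 ℝ} (hzX : z ∉ range (deltaEmb 𝓔 ℝ)) {xs : ι → X}
    (hz : MapClusterPt z l (deltaEmb 𝓔 ℝ ∘ xs)) : MapClusterPt z l (deltaEmb 𝓔 ℝ ∘ g ∘ xs) := by
  obtain ⟨h, hfix, hδ⟩ := hg
  have := hz.continuousAt_comp h.continuous.continuousAt
  simpa only [hfix z hzX, Function.comp_def, hδ] using this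

end HigsonCompactification

abbrev IsMetricOn.toMetricSpace {X : Type u} {d : X → X → ℝ} (hd : IsMetricOn d) :
    MetricSpace X where
  dist := d
  dist_self := hd.refl
  dist_comm := hd.symm
  dist_triangle := hd.triangle
  eq_of_dist_eq_zero := hd.eq_of _ _

section MetricCoarse

open Metric

variable (X : Type u) [MetricSpace X]

def metricCoarse : Set (Set (X × X)) :=
  {E | IsEntourage E ∧ ∃ n : ℕ, ∀ p ∈ E, dist p.1 p.2 ≤ (n : ℝ)}

variable {X}

def uniformEnt (r : ℝ) : Set (X × X) := {p | dist p.1 p.2 ≤ r}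

theorem uniformEnt_mem_metricCoarse (n : ℕ) : uniformEnt (n : ℝ) ∈ metricCoarse X :=
  ⟨fun x => by simp [uniformEnt], n, fun _ hp => hp⟩

theorem entBall_uniformEnt (r : ℝ) (x : X) : entBall (uniformEnt r) x = closedBall x r := by
  ext y
  simp [entBall, uniformEnt, dist_comm]

theorem exists_subset_uniformEnt {E : Set (X × X)} (hE : E ∈ metricCoarse X) :
    ∃ n : ℕ, E ⊆ uniformEnt (n : ℝ) :=
  let ⟨_, n, hn⟩ := hE
  ⟨n, hn⟩

theorem IsBoundedSet.finite_of_metricCoarse (hball : ∀ (x : X) (r : ℝ), (closedBall x r).Finite)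
    {B : Set X} (hB : IsBoundedSet (metricCoarse X) B) : B.Finite := by
  obtain ⟨E, hE, x, hBx⟩ := hB
  obtain ⟨n, hn⟩ := exists_subset_uniformEnt hE
  refine (hball x n).subset (hBx.trans ?_)
  rw [← entBall_uniformEnt]
  exact fun y hy => hn hy

theorem Set.Finite.isBoundedSet_metricCoarse [Nonempty X] {B : Set X} (hB : B.Finite) :
    IsBoundedSet (metricCoarse X) B := by
  obtain ⟨x⟩ := ‹Nonempty X›
  obtain ⟨r, hr⟩ := (isBounded_iff_subset_closedBall x).mp hB.isBounded
  refine ⟨_, uniformEnt_mem_metricCoarse ⌈r⌉₊, x, ?_⟩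
  rw [entBall_uniformEnt]
  exact hr.trans (closedBall_subset_closedBall (Nat.le_ceil r))

theorem slowlyOscillating_metricCoarse_iff [Nonempty X]
    (hball : ∀ (x : X) (r : ℝ), (closedBall x r).Finite) {M : Type v} [MetricSpace M]
    {φ : X → M} : SlowlyOscillating (metricCoarse X) φ ↔
      ∀ r ε : ℝ, 0 < ε → ∀ᶠ x in cofinite, ∀ y ∈ closedBall x r, dist (φ y) (φ x) < ε := by
  constructor
  · intro hφ r ε hε
    obtain ⟨B, hB, hφB⟩ := hφ ε hε _ (uniformEnt_mem_metricCoarse ⌈r⌉₊)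
    filter_upwards [(hB.finite_of_metricCoarse hball).eventually_cofinite_notMem] with x hx y hy
    have hx' := hφB x hx
    rw [entBall_uniformEnt] at hx'
    have hr : closedBall x r ⊆ closedBall x ⌈r⌉₊ := closedBall_subset_closedBall (Nat.le_ceil r)
    exact edist_lt_ofReal.mp ((edist_le_ediam_of_mem (mem_image_of_mem φ (hr hy))
      (mem_image_of_mem φ (hr (mem_closedBall_self (dist_nonneg.trans hy))))).trans_lt hx')
  · intro hφ ε hε E hE
    obtain ⟨n, hn⟩ := exists_subset_uniformEnt hE
    refine ⟨_, (eventually_cofinite.mp (hφ n (ε / 3) (by positivity))).isBoundedSet_metricCoarse,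
      fun x hx => ?_⟩
    replace hx := not_not.mp hx
    have hsub : entBall E x ⊆ closedBall x n := by
      rw [← entBall_uniformEnt]; exact fun y hy => hn hy
    refine (ediam_image_le_iff.mpr fun y hy y' hy' => ?_).trans_lt
      ((ENNReal.ofReal_lt_ofReal_iff hε).mpr (by linarith : 2 * (ε / 3) < ε))
    rw [edist_dist]
    refine ENNReal.ofReal_le_ofReal ((dist_triangle_right _ _ (φ x)).trans ?_)
    linarith [hx y (hsub hy), hx y' (hsub hy')]

theorem encard_closedBall_le_of_isFinitaryCoarse (hfin : IsFinitaryCoarse (metricCoarse X))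
    (r : ℝ) : ∃ m : ℕ, ∀ x : X, (closedBall x r).encard ≤ m := by
  obtain ⟨m, hm⟩ := hfin _ (uniformEnt_mem_metricCoarse ⌈r⌉₊)
  refine ⟨m, fun x => ?_⟩
  simp only [entBall_uniformEnt] at hm
  calc (closedBall x r).encard ≤ (closedBall x ⌈r⌉₊).encard :=
        encard_le_encard (closedBall_subset_closedBall (Nat.le_ceil r))
    _ = (closedBall x ⌈r⌉₊).ncard := (hm x).1.cast_ncard_eq.symm
    _ ≤ m := Nat.cast_le.mpr (hm x).2

theorem finite_closedBall_of_encard_le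
    (hbdd : ∀ r : ℝ, ∃ m : ℕ, ∀ x : X, (closedBall x r).encard ≤ m) (x : X) (r : ℝ) :
    (closedBall x r).Finite :=
  let ⟨_, hm⟩ := hbdd r
  finite_of_encard_le_coe (hm x)

end MetricCoarse

section BoundedDisplacement

open Metric

variable {X : Type u} [MetricSpace X] [Nonempty X]
  (hball : ∀ (x : X) (r : ℝ), (closedBall x r).Finite)
include hball

theorem comp_mem_soSet_of_dist_le {g : X → X} (hg : Function.Injective g) {s : ℝ}
    (hs : ∀ x, dist x (g x) ≤ s) {f : X → ℝ} (hf : f ∈ soSet (metricCoarse X) ℝ) :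
    f ∘ g ∈ soSet (metricCoarse X) ℝ := by
  refine ⟨hf.1.subset (range_comp_subset_range g f), ?_⟩
  have hf' := (slowlyOscillating_metricCoarse_iff hball).mp hf.2
  refine (slowlyOscillating_metricCoarse_iff hball).mpr fun r ε hε => ?_
  filter_upwards [hg.tendsto_cofinite.eventually (hf' (s + r + s) ε hε)] with x hx y hy
  refine hx (g y) ?_
  calc dist (g y) (g x) ≤ dist (g y) y + dist y x + dist x (g x) := dist_triangle4 _ _ _ _
    _ ≤ s + r + s := by
      gcongr
      exacts [dist_comm y (g y) ▸ hs y, hy, hs x]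

theorem tendsto_dist_comp_of_dist_le {g : X → X} {s : ℝ} (hs : ∀ x, dist x (g x) ≤ s)
    {f : X → ℝ} (hf : SlowlyOscillating (metricCoarse X) f) :
    Tendsto (fun x => dist (f (g x)) (f x)) cofinite (𝓝 0) := by
  refine Metric.tendsto_nhds.mpr fun ε hε => ?_
  filter_upwards [(slowlyOscillating_metricCoarse_iff hball).mp hf s ε hε] with x hx
  simpa using hx (g x) (by rw [mem_closedBall, dist_comm]; exact hs x)

theorem mem_hPermGroup_of_dist_le {g : Equiv.Perm X} {s : ℝ} (hs : ∀ x, dist x (g x) ≤ s) :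
    g ∈ hPermGroup (metricCoarse X) ℝ := by
  have hs' : ∀ x, dist x (g.symm x) ≤ s := fun x => by
    simpa [dist_comm] using hs (g.symm x)
  exact mem_hPermGroup_of_tendsto_cofinite g
    (fun f hf => comp_mem_soSet_of_dist_le hball g.injective hs hf)
    (fun f hf => comp_mem_soSet_of_dist_le hball g.symm.injective hs' hf)
    (fun f hf => tendsto_dist_comp_of_dist_le hball hs hf.2)

end BoundedDisplacement

namespace SimpleGraph

variable {V : Type*} (G : SimpleGraph V) (K : Type*)

/-- A partial proper edge colouring of `G` by `K`, encoded as a set of coloured edges: two coloured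
edges with a common vertex are equal exactly when their colours are, so that every edge has at most
one colour and every colour class is a matching. -/
def IsPartialEdgeColoring (C : Set (Sym2 V × K)) : Prop :=
  (∀ c ∈ C, c.1 ∈ G.edgeSet) ∧
    ∀ c ∈ C, ∀ c' ∈ C, (∃ v, v ∈ c.1 ∧ v ∈ c'.1) → (c.1 = c'.1 ↔ c.2 = c'.2)

theorem exists_maximal_isPartialEdgeColoring : ∃ C, Maximal (G.IsPartialEdgeColoring K) C := by
  refine zorn_subset _ fun ch hch hchain => ⟨⋃₀ ch, ⟨?_, ?_⟩, fun _ => subset_sUnion_of_mem⟩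
  · rintro c ⟨s, hs, hc⟩
    exact (hch hs).1 c hc
  · rintro c ⟨s, hs, hc⟩ c' ⟨t, ht, hc'⟩
    rcases hchain.total hs ht with hst | hts
    · exact (hch ht).2 c (hst hc) c' hc'
    · exact (hch hs).2 c hc c' (hts hc')

variable {G K}

namespace IsPartialEdgeColoring

def colorsAt (C : Set (Sym2 V × K)) (v : V) : Set K := {k | ∃ w, (s(v, w), k) ∈ C}

noncomputable def swap (C : Set (Sym2 V × K)) (k : K) (v : V) : V :=
  open Classical in if h : k ∈ colorsAt C v then h.choose else v

theorem swap_eq_self {C : Set (Sym2 V × K)} {v : V} {k : K} (h : k ∉ colorsAt C v) :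
    swap C k v = v :=
  dif_neg h

variable {C : Set (Sym2 V × K)} (hC : G.IsPartialEdgeColoring K C)
include hC

theorem eq_of_mem {v w w' : V} {k : K} (h : (s(v, w), k) ∈ C) (h' : (s(v, w'), k) ∈ C) :
    w = w' :=
  Sym2.congr_right.mp ((hC.2 _ h _ h' ⟨v, Sym2.mem_mk_left v w, Sym2.mem_mk_left v w'⟩).mpr rfl)

theorem swap_eq {v w : V} {k : K} (h : (s(v, w), k) ∈ C) : swap C k v = w := by
  have hex : k ∈ colorsAt C v := ⟨w, h⟩
  rw [swap, dif_pos hex]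
  exact hC.eq_of_mem hex.choose_spec h

theorem swap_involutive (k : K) : Function.Involutive (swap C k) := by
  intro v
  by_cases hk : k ∈ colorsAt C v
  · obtain ⟨w, hw⟩ := hk
    rw [hC.swap_eq hw, hC.swap_eq (Sym2.eq_swap ▸ hw)]
  · rw [swap_eq_self hk, swap_eq_self hk]

theorem swap_eq_self_or_adj (k : K) (v : V) : swap C k v = v ∨ G.Adj v (swap C k v) := by
  by_cases hk : k ∈ colorsAt C v
  · obtain ⟨w, hw⟩ := hk
    exact .inr (hC.swap_eq hw ▸ hC.1 _ hw)
  · exact .inl (swap_eq_self hk)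

theorem encard_colorsAt_le (v : V) : (colorsAt C v).encard ≤ (G.neighborSet v).encard := by
  have hinj : InjOn (fun k => swap C k v) (colorsAt C v) := by
    rintro k ⟨w, hw⟩ k' ⟨w', hw'⟩ hkk'
    simp only [hC.swap_eq hw, hC.swap_eq hw'] at hkk'
    subst hkk'
    exact (hC.2 _ hw _ hw' ⟨v, Sym2.mem_mk_left v w, Sym2.mem_mk_left v w⟩).mp rfl
  rw [← hinj.encard_image]
  refine encard_le_encard ?_
  rintro _ ⟨k, ⟨w, hw⟩, rfl⟩
  show G.Adj v (swap C k v)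
  rw [hC.swap_eq hw]
  exact hC.1 _ hw

theorem insert {x y : V} {k : K} (hxy : G.Adj x y) (hunc : ∀ j, (s(x, y), j) ∉ C)
    (hk : k ∉ colorsAt C x ∪ colorsAt C y) :
    G.IsPartialEdgeColoring K (insert (s(x, y), k) C) := by
  have hfresh : ∀ c ∈ C, (∃ v, v ∈ s(x, y) ∧ v ∈ c.1) → s(x, y) ≠ c.1 ∧ k ≠ c.2 := by
    rintro ⟨e, j⟩ hc ⟨v, hv, hve⟩
    refine ⟨fun h => hunc j (h ▸ hc), fun h => hk ?_⟩
    obtain ⟨w, rfl⟩ := Sym2.mem_iff_exists.mp hve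
    rcases Sym2.mem_iff.mp hv with rfl | rfl
    exacts [.inl ⟨w, h ▸ hc⟩, .inr ⟨w, h ▸ hc⟩]
  refine ⟨?_, ?_⟩
  · rintro c (rfl | hc)
    exacts [hxy, hC.1 c hc]
  · rintro c (rfl | hc) c' (rfl | hc') hv
    · simp
    · exact iff_of_false (hfresh c' hc' hv).1 (hfresh c' hc' hv).2
    · obtain ⟨v, hv, hv'⟩ := hv
      exact iff_of_false (hfresh c hc ⟨v, hv', hv⟩).1.symm (hfresh c hc ⟨v, hv', hv⟩).2.symm
    · exact hC.2 c hc c' hc' hv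

end IsPartialEdgeColoring

open IsPartialEdgeColoring in
theorem exists_mem_of_maximal_isPartialEdgeColoring [Fintype K] {m : ℕ}
    (hdeg : ∀ v, (G.neighborSet v).encard ≤ m) (hK : 2 * m < Fintype.card K)
    {C : Set (Sym2 V × K)} (hC : Maximal (G.IsPartialEdgeColoring K) C) {x y : V}
    (hxy : G.Adj x y) : ∃ k, (s(x, y), k) ∈ C := by
  by_contra! hunc
  have hfree : colorsAt C x ∪ colorsAt C y ≠ univ := by
    intro h
    have := (encard_union_le _ _).trans
      (add_le_add ((hC.1.encard_colorsAt_le x).trans (hdeg x))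
        ((hC.1.encard_colorsAt_le y).trans (hdeg y)))
    rw [h, encard_univ, ENat.card_eq_coe_fintype_card] at this
    norm_cast at this
    omega
  obtain ⟨k, hk⟩ := (ne_univ_iff_exists_notMem _).mp hfree
  exact hunc k (hC.2 (hC.1.insert hxy hunc hk) (subset_insert _ _) (mem_insert _ _))

theorem exists_involutions_cover_edges {m : ℕ} (hdeg : ∀ v, (G.neighborSet v).encard ≤ m) :
    ∃ σ : Fin (2 * m + 1) → Equiv.Perm V, (∀ i v, σ i v = v ∨ G.Adj v (σ i v)) ∧
      ∀ v w, G.Adj v w → ∃ i, σ i v = w := by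
  obtain ⟨C, hC⟩ := G.exists_maximal_isPartialEdgeColoring (Fin (2 * m + 1))
  refine ⟨fun k => (hC.1.swap_involutive k).toPerm, fun k v => hC.1.swap_eq_self_or_adj k v,
    fun v w hvw => ?_⟩
  obtain ⟨k, hk⟩ := exists_mem_of_maximal_isPartialEdgeColoring hdeg (by simp) hC hvw
  exact ⟨k, hC.1.swap_eq hk⟩

end SimpleGraph

section Urysohn

open Metric

variable {X : Type u} [MetricSpace X]

theorem dist_infDist_div_le (A B : Set X) {x y : X} (hx : 0 < infDist x A + infDist x B)
    (hy : 0 < infDist y A + infDist y B) :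
    dist (infDist y A / (infDist y A + infDist y B)) (infDist x A / (infDist x A + infDist x B)) ≤
      dist y x / (infDist x A + infDist x B) := by
  have hlip : ∀ s : Set X, |infDist x s - infDist y s| ≤ dist y x := fun s => by
    simpa [Real.dist_eq, dist_comm] using (lipschitz_infDist_pt s).dist_le_mul x y
  set Dx := infDist x A + infDist x B
  set Dy := infDist y A + infDist y B
  have hnum : |infDist y A * Dx - Dy * infDist x A| ≤ Dy * dist y x :=
    calc |infDist y A * Dx - Dy * infDist x A|
        = |infDist y A * (infDist x B - infDist y B) +
            infDist y B * -(infDist x A - infDist y A)| := by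
          congr 1; ring
      _ ≤ infDist y A * |infDist x B - infDist y B| +
            infDist y B * |infDist x A - infDist y A| := by
          refine (abs_add_le _ _).trans_eq ?_
          rw [abs_mul, abs_mul, abs_neg, abs_of_nonneg infDist_nonneg, abs_of_nonneg infDist_nonneg]
      _ ≤ infDist y A * dist y x + infDist y B * dist y x :=
          add_le_add (mul_le_mul_of_nonneg_left (hlip B) infDist_nonneg)
            (mul_le_mul_of_nonneg_left (hlip A) infDist_nonneg)
      _ = Dy * dist y x := by ring
  rw [Real.dist_eq, div_sub_div _ _ hy.ne' hx.ne', abs_div, abs_of_pos (mul_pos hy hx)]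
  calc _ ≤ Dy * dist y x / (Dy * Dx) := div_le_div_of_nonneg_right hnum (mul_pos hy hx).le
    _ = dist y x / Dx := mul_div_mul_left _ _ hy.ne'

theorem exists_mem_soSet_eq_zero_eq_one (hball : ∀ (x : X) (r : ℝ), (closedBall x r).Finite)
    {A B : Set X} (hA : A.Nonempty) (hB : B.Nonempty) (hAB : ∀ a ∈ A, ∀ b ∈ B, 1 ≤ dist a b)
    (hdiv : ∀ R : ℝ, {a ∈ A | ∃ b ∈ B, dist a b ≤ R}.Finite) :
    ∃ φ ∈ soSet (metricCoarse X) ℝ, (∀ a ∈ A, φ a = 0) ∧ ∀ b ∈ B, φ b = 1 := by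
  have : Nonempty X := ⟨hA.some⟩
  set D : X → ℝ := fun x => infDist x A + infDist x B
  -- `φ = infDist · A / D` oscillates by at most `r / D x` on `closedBall x r`, and `D` tends to
  -- infinity along the cofinite filter because `A` and `B` diverge.
  have hnear : ∀ x δ, 0 < δ → ∃ a ∈ A, ∃ b ∈ B, dist x a < D x + δ ∧ dist a b < D x + δ := by
    intro x δ hδ
    obtain ⟨a, ha, hxa⟩ := (infDist_lt_iff hA).mp (lt_add_of_pos_right (infDist x A) (half_pos hδ))
    obtain ⟨b, hb, hxb⟩ := (infDist_lt_iff hB).mp (lt_add_of_pos_right (infDist x B) (half_pos hδ))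
    refine ⟨a, ha, b, hb, by linarith [infDist_nonneg (x := x) (s := B)], ?_⟩
    linarith [dist_triangle_left a b x]
  have hD : ∀ x, 1 ≤ D x := fun x => le_of_forall_pos_lt_add fun δ hδ => by
    obtain ⟨a, ha, b, hb, -, hab⟩ := hnear x δ hδ
    exact (hAB a ha b hb).trans_lt hab
  have hDpos : ∀ x, 0 < D x := fun x => one_pos.trans_le (hD x)
  have hDfin : ∀ R, {x | D x ≤ R}.Finite := by
    intro R
    refine ((hdiv (R + 1)).biUnion fun a _ => hball a (R + 1)).subset fun x hx => ?_
    obtain ⟨a, ha, b, hb, hxa, hab⟩ := hnear x 1 one_pos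
    exact mem_biUnion ⟨ha, b, hb, by linarith [hx.out]⟩ (by rw [mem_closedBall]; linarith [hx.out])
  refine ⟨fun x => infDist x A / D x,
    ⟨(isBounded_Icc (0 : ℝ) 1).subset (range_subset_iff.mpr fun x => ?_), ?_⟩,
    fun a ha => by simp [infDist_zero_of_mem ha], fun b hb => ?_⟩
  · exact ⟨div_nonneg infDist_nonneg (hDpos x).le,
      div_le_one_of_le₀ (le_add_of_nonneg_right infDist_nonneg) (hDpos x).le⟩
  · refine (slowlyOscillating_metricCoarse_iff hball).mpr fun r ε hε => ?_
    have hfar : ∀ᶠ x in cofinite, r / ε < D x :=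
      eventually_cofinite.mpr ((hDfin (r / ε)).subset fun x hx => not_lt.mp hx)
    filter_upwards [hfar] with x hx y hy
    calc _ ≤ dist y x / D x := dist_infDist_div_le A B (hDpos x) (hDpos y)
      _ ≤ r / D x := div_le_div_of_nonneg_right hy (hDpos x).le
      _ < ε := by rwa [div_lt_iff₀ (hDpos x), ← div_lt_iff₀' hε]
  · have hb' : infDist b A ≠ 0 := by
      have := hD b
      simp only [D, infDist_zero_of_mem hb, add_zero] at this
      positivity
    simp [D, infDist_zero_of_mem hb, hb']

end Urysohn

section DisplacementOfHPermGroup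

open Metric

variable {X : Type u} [MetricSpace X] (hball : ∀ (x : X) (r : ℝ), (closedBall x r).Finite)
include hball

theorem indicator_singleton_mem_soSet (y : X) :
    ({y} : Set X).indicator 1 ∈ soSet (metricCoarse X) ℝ := by
  have : Nonempty X := ⟨y⟩
  refine ⟨(isBounded_Icc (0 : ℝ) 1).subset (range_subset_iff.mpr fun x => ?_),
    (slowlyOscillating_metricCoarse_iff hball).mpr fun r ε hε => ?_⟩
  · by_cases hx : x = y <;> simp [hx]
  filter_upwards [(hball y r).eventually_cofinite_notMem] with x hx z hz
  have hzy : z ≠ y := by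
    rintro rfl
    exact hx (by rwa [mem_closedBall, dist_comm])
  have hxy : x ≠ y := by
    rintro rfl
    exact hx (mem_closedBall_self (dist_nonneg.trans hz))
  simpa [hxy, hzy] using hε

theorem notMem_range_deltaEmb_of_mapClusterPt {ι : Type*} {l : Filter ι} {xs : ι → X}
    (hxs : Tendsto xs l cofinite) {z : HComp (metricCoarse X) ℝ}
    (hz : MapClusterPt z l (deltaEmb (metricCoarse X) ℝ ∘ xs)) :
    z ∉ range (deltaEmb (metricCoarse X) ℝ) := by
  rintro ⟨y, rfl⟩
  have h := hz.hComp_apply_eq ⟨_, indicator_singleton_mem_soSet hball y⟩ (c := 0)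
    ((hxs.eventually (eventually_cofinite_ne y)).mono fun i hi => by simp [hi])
  simp [deltaEmb, deltaMap] at h

theorem exists_far_point {g : Equiv.Perm X} (hg : ∀ r : ℝ, ∃ x, r < dist x (g x))
    (S : Finset X) (r : ℝ) : ∃ x, r < dist x (g x) ∧ ∀ p ∈ S, r < dist x p ∧ r < dist (g x) p := by
  set bad := ⋃ p ∈ S, closedBall p r ∪ g ⁻¹' closedBall p r
  have hbad : bad.Finite := S.finite_toSet.biUnion fun p _ =>
    (hball p r).union ((hball p r).preimage g.injective.injOn)
  obtain ⟨M, hM⟩ := (hbad.image fun x => dist x (g x)).bddAbove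
  obtain ⟨x, hx⟩ := hg (max r M)
  refine ⟨x, (le_max_left _ _).trans_lt hx, fun p hp => ?_⟩
  have : ¬(x ∈ closedBall p r ∨ g x ∈ closedBall p r) := fun h =>
    (hM ⟨x, mem_biUnion hp h, rfl⟩).not_gt ((le_max_right _ _).trans_lt hx)
  simpa [not_or] using this

theorem exists_injective_seq_lt_dist {g : Equiv.Perm X} (hg : ∀ r : ℝ, ∃ x, r < dist x (g x)) :
    ∃ xs : ℕ → X, Function.Injective xs ∧
      ∀ i j : ℕ, (i : ℝ) + 1 < dist (xs i) (g (xs j)) := by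
  classical
  choose c hc using exists_far_point hball hg
  let S : ℕ → Finset X := fun k =>
    Nat.rec ∅ (fun k s => insert (c s (k + 1)) (insert (g (c s (k + 1))) s)) k
  let xs : ℕ → X := fun k => c (S k) (k + 1)
  have hS : ∀ i j, i < j → xs i ∈ S j ∧ g (xs i) ∈ S j := by
    intro i j hij
    induction j with
    | zero => omega
    | succ j ih =>
      change xs i ∈ insert (xs j) (insert (g (xs j)) (S j)) ∧
        g (xs i) ∈ insert (xs j) (insert (g (xs j)) (S j))
      rcases Nat.lt_succ_iff_lt_or_eq.mp hij with h | rfl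
      · simp [ih h]
      · simp
  have hfar : ∀ i j : ℕ, i < j → ((j : ℝ) + 1 < dist (xs j) (xs i) ∧
      (j : ℝ) + 1 < dist (xs j) (g (xs i))) ∧ (j : ℝ) + 1 < dist (g (xs j)) (xs i) := by
    intro i j hij
    have h1 := (hc (S j) (j + 1)).2 _ (hS i j hij).1
    have h2 := (hc (S j) (j + 1)).2 _ (hS i j hij).2
    exact ⟨⟨h1.1, h2.1⟩, h1.2⟩
  refine ⟨xs, fun i j hij => ?_, fun i j => ?_⟩
  · by_contra hne
    rcases lt_or_gt_of_ne hne with h | h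
    · exact dist_pos.mp ((by positivity : (0 : ℝ) < j + 1).trans (hfar i j h).1.1) hij.symm
    · exact dist_pos.mp ((by positivity : (0 : ℝ) < i + 1).trans (hfar j i h).1.1) hij
  · rcases lt_trichotomy i j with h | rfl | h
    · rw [dist_comm]
      exact lt_trans (by simpa using h) (hfar i j h).2
    · exact (hc (S i) (i + 1)).1
    · exact (hfar j i h).1.2

end DisplacementOfHPermGroup

section MainTheorem

open Metric

variable {X : Type u} [MetricSpace X]

theorem exists_dist_le_of_mem_hPermGroup (hball : ∀ (x : X) (r : ℝ), (closedBall x r).Finite)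
    {g : Equiv.Perm X} (hg : g ∈ hPermGroup (metricCoarse X) ℝ) :
    ∃ s : ℝ, ∀ x, dist x (g x) ≤ s := by
  by_contra! hunb
  obtain ⟨xs, hinj, hsep⟩ := exists_injective_seq_lt_dist hball hunb
  obtain ⟨φ, hφ, hφ0, hφ1⟩ := exists_mem_soSet_eq_zero_eq_one hball (range_nonempty xs)
    (range_nonempty (g ∘ xs))
    (by
      rintro _ ⟨i, rfl⟩ _ ⟨j, rfl⟩
      exact (by linarith [hsep i j, (i.cast_nonneg : (0 : ℝ) ≤ i)] : 1 ≤ dist (xs i) (g (xs j))))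
    (fun R => ((finite_Iio ⌈R⌉₊).image xs).subset <| by
      rintro _ ⟨⟨i, rfl⟩, _, ⟨j, rfl⟩, hij⟩
      exact ⟨i, Nat.lt_ceil.mpr (by linarith [hsep i j, show dist (xs i) (g (xs j)) ≤ R from hij]),
        rfl⟩)
  obtain ⟨z, hz⟩ :=
    exists_clusterPt_of_compactSpace (map (deltaEmb (metricCoarse X) ℝ ∘ xs) cofinite)
  have hzX := notMem_range_deltaEmb_of_mapClusterPt hball hinj.tendsto_cofinite hz
  have h0 := MapClusterPt.hComp_apply_eq hz ⟨φ, hφ⟩ (.of_forall fun k => hφ0 _ ⟨k, rfl⟩)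
  have h1 := (MapClusterPt.comp_of_mem_hPermGroup hg hzX hz).hComp_apply_eq ⟨φ, hφ⟩
    (.of_forall fun k => hφ1 _ ⟨k, rfl⟩)
  exact zero_ne_one (h0.symm.trans h1)

theorem mem_metricCoarse_of_mem_permCoarse (hball : ∀ (x : X) (r : ℝ), (closedBall x r).Finite)
    {E : Set (X × X)} (hE : E ∈ permCoarse (hPermGroup (metricCoarse X) ℝ)) :
    E ∈ metricCoarse X := by
  obtain ⟨hent, F, hF, hEF⟩ := hE
  choose! s hs using fun g (hg : g ∈ F) => exists_dist_le_of_mem_hPermGroup hball (hF hg)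
  obtain ⟨M, hM⟩ := (F.finite_toSet.image s).bddAbove
  refine ⟨hent, ⌈M⌉₊, fun p hp => ?_⟩
  rcases hEF hp with h | ⟨g, hg, h⟩
  · rw [h, dist_self]
    positivity
  · rw [h]
    exact (hs g hg p.1).trans ((hM ⟨g, hg, rfl⟩).trans (Nat.le_ceil M))

theorem mem_permCoarse_of_mem_metricCoarse [Nonempty X]
    (hbdd : ∀ r : ℝ, ∃ m : ℕ, ∀ x : X, (closedBall x r).encard ≤ m) {E : Set (X × X)}
    (hE : E ∈ metricCoarse X) : E ∈ permCoarse (hPermGroup (metricCoarse X) ℝ) := by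
  classical
  obtain ⟨n, hn⟩ := exists_subset_uniformEnt hE
  obtain ⟨m, hm⟩ := hbdd n
  let G : SimpleGraph X := .fromRel fun x y => dist x y ≤ n
  have hG : ∀ {x y}, G.Adj x y → dist x y ≤ n := by
    rintro x y ⟨-, h | h⟩
    exacts [h, dist_comm x y ▸ h]
  obtain ⟨σ, hσG, hσ⟩ := G.exists_involutions_cover_edges (m := m) fun v =>
    (encard_le_encard fun w hw => (by rw [mem_closedBall, dist_comm]; exact hG hw)).trans (hm v)
  refine ⟨hE.1, Finset.univ.image σ, ?_, fun p hp => ?_⟩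
  · intro g hg
    obtain ⟨i, -, rfl⟩ := Finset.mem_image.mp hg
    refine mem_hPermGroup_of_dist_le (finite_closedBall_of_encard_le hbdd) (s := n) fun x => ?_
    rcases hσG i x with h | h
    · rw [h, dist_self]
      positivity
    · exact hG h
  · by_cases h : p.2 = p.1
    · exact .inl h
    · obtain ⟨i, hi⟩ := hσ p.1 p.2 ⟨Ne.symm h, .inl (hn hp)⟩
      exact .inr ⟨σ i, by simp, hi.symm⟩

theorem metricCoarse_eq_permCoarse_hPermGroup (hfin : IsFinitaryCoarse (metricCoarse X)) :
    metricCoarse X = permCoarse (hPermGroup (metricCoarse X) ℝ) := by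
  have hbdd := encard_closedBall_le_of_isFinitaryCoarse hfin
  rcases isEmpty_or_nonempty X with hX | hX
  · ext E
    exact ⟨fun hE => ⟨hE.1, ∅, by simp, fun p => isEmptyElim p.1⟩,
      fun hE => ⟨hE.1, 0, fun p => isEmptyElim p.1⟩⟩
  ext E
  exact ⟨mem_permCoarse_of_mem_metricCoarse hbdd,
    mem_metricCoarse_of_mem_permCoarse (finite_closedBall_of_encard_le hbdd)⟩

end MainTheorem

theorem statement3_general {X : Type u} (𝓔 : Set (Set (X × X)))
    (hfin : IsFinitaryCoarse 𝓔) (hmet : IsMetrizableCoarse 𝓔) :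
    𝓔 = permCoarse (hPermGroup 𝓔 ℝ) := by
  obtain ⟨d, hd, rfl⟩ := hmet
  let _ := hd.toMetricSpace
  exact metricCoarse_eq_permCoarse_hPermGroup hfin

/-- If `(X,𝓔)` is a finitary metrizable coarse space and `G` is the
permutation group of its Higson compactification `h_ℝ(X,𝓔)`, then `𝓔 = 𝓔_G`. -/
theorem statement3 {X : Type u} (𝓔 : Set (Set (X × X))) (hcs : IsCoarseStructure 𝓔)
    (hfin : IsFinitaryCoarse 𝓔) (hmet : IsMetrizableCoarse 𝓔) :
    𝓔 = permCoarse (hPermGroup 𝓔 ℝ) :=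
  statement3_general 𝓔 hfin hmet
end

section
/- Let M be a proper metric space. The M-compactification h_M(X,𝓔) of any finitary coarse space (X,𝓔) is M-soft. -/
/-!
Identify `X` with the isolated points of `h_M(X, 𝓔)` via `δ_M`. If `φ ∘ δ_M` is slowly
oscillating, it is one of the coordinates of `h_M(X, 𝓔)`, so `φ` extends continuously and its
oscillation vanishes everywhere. Otherwise some entourage `G` and `ε > 0` give, outside every
finite set, a pair `(a, b) ∈ G` with `dist (φ a) (φ b) > ε`; swapping infinitely many disjoint
such pairs is a permutation of `X` of bounded displacement. In a finitary space such a
permutation moves every slowly oscillating function by little outside a finite set, so,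
extended by the identity on the corona, it is a homeomorphism of `h_M(X, 𝓔)`.
-/

open Set Filter Topology

universe u u₁ u₂ v w

namespace IsCoarseStructure

variable {X : Type u} {𝓔 : Set (Set (X × X))}

lemma inv_mem (hcs : IsCoarseStructure 𝓔) {E : Set (X × X)} (hE : E ∈ 𝓔) : entInv E ∈ 𝓔 := by
  have hdiag : {p : X × X | p.2 = p.1} ∈ 𝓔 := by
    refine hcs.downward _ E (fun _ => rfl) ?_ hE
    rintro ⟨a, b⟩ (rfl : b = a)
    exact hcs.ent E hE b
  obtain ⟨G, hG, hsub⟩ := hcs.comp_subset _ hdiag E hE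
  exact hcs.downward _ G (hcs.ent E hE) (fun p hp => hsub ⟨p.1, rfl, hp⟩) hG

lemma exists_entComp_subset (hcs : IsCoarseStructure 𝓔) {E F : Set (X × X)} (hE : E ∈ 𝓔)
    (hF : F ∈ 𝓔) : ∃ G ∈ 𝓔, entComp E F ⊆ G :=
  hcs.comp_subset E hE (entInv F) (hcs.inv_mem hF)

lemma exists_union_subset (hcs : IsCoarseStructure 𝓔) {E F : Set (X × X)} (hE : E ∈ 𝓔)
    (hF : F ∈ 𝓔) : ∃ G ∈ 𝓔, E ∪ F ⊆ G := by
  obtain ⟨G, hG, hsub⟩ := hcs.exists_entComp_subset hE hF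
  refine ⟨G, hG, ?_⟩
  rintro ⟨a, b⟩ (h | h)
  · exact hsub ⟨b, h, hcs.ent F hF b⟩
  · exact hsub ⟨a, hcs.ent E hE a, h⟩

lemma isBoundedSet_union (hcs : IsCoarseStructure 𝓔) {A B : Set X} (hA : IsBoundedSet 𝓔 A)
    (hB : IsBoundedSet 𝓔 B) : IsBoundedSet 𝓔 (A ∪ B) := by
  obtain ⟨E, hE, x, hA⟩ := hA
  obtain ⟨F, hF, y, hB⟩ := hB
  obtain ⟨D, hD, hxy⟩ := hcs.cover (x, y)
  obtain ⟨C, hC, hDF⟩ := hcs.exists_entComp_subset hD hF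
  obtain ⟨G, hG, hEC⟩ := hcs.exists_union_subset hE hC
  refine ⟨G, hG, x, ?_⟩
  rintro a (ha | ha)
  · exact hEC (Or.inl (hA ha))
  · exact hEC (Or.inr (hDF ⟨y, hxy, hB ha⟩))

lemma isBoundedSet_singleton (hcs : IsCoarseStructure 𝓔) (x : X) : IsBoundedSet 𝓔 {x} := by
  obtain ⟨E, hE, -⟩ := hcs.cover (x, x)
  exact ⟨E, hE, x, singleton_subset_iff.2 (hcs.ent E hE x)⟩

lemma isBoundedSet_of_finite [Nonempty X] (hcs : IsCoarseStructure 𝓔) {B : Set X}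
    (hB : B.Finite) : IsBoundedSet 𝓔 B := by
  induction B, hB using Set.Finite.induction_on with
  | empty =>
    obtain ⟨x⟩ := ‹Nonempty X›
    obtain ⟨E, hE, -⟩ := hcs.cover (x, x)
    exact ⟨E, hE, x, empty_subset _⟩
  | insert _ _ ih => exact hcs.isBoundedSet_union (hcs.isBoundedSet_singleton _) ih

end IsCoarseStructure

lemma IsFinitaryCoarse.finite_of_isBoundedSet {X : Type u} {𝓔 : Set (Set (X × X))}
    (hfin : IsFinitaryCoarse 𝓔) {B : Set X} (hB : IsBoundedSet 𝓔 B) : B.Finite := by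
  obtain ⟨E, hE, x, hsub⟩ := hB
  obtain ⟨n, hn⟩ := hfin E hE
  exact (hn x).1.subset hsub

lemma SlowlyOscillating.exists_finite_dist_lt {X : Type u} {𝓔 : Set (Set (X × X))} {M : Type v}
    [MetricSpace M] (hcs : IsCoarseStructure 𝓔) (hfin : IsFinitaryCoarse 𝓔) {f : X → M}
    (hf : SlowlyOscillating 𝓔 f) {G : Set (X × X)} (hG : G ∈ 𝓔) {ε : ℝ} (hε : 0 < ε) :
    ∃ B : Set X, B.Finite ∧ ∀ x ∉ B, ∀ y ∈ entBall G x, dist (f y) (f x) < ε := by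
  obtain ⟨B, hB, hdiam⟩ := hf ε hε G hG
  refine ⟨B, hfin.finite_of_isBoundedSet hB, fun x hx y hy => edist_lt_ofReal.1 ?_⟩
  exact (Metric.edist_le_ediam_of_mem (mem_image_of_mem f hy)
    (mem_image_of_mem f (hcs.ent G hG x))).trans_lt (hdiam x hx)

section Compactification

open scoped Classical

variable {X : Type u} {𝓔 : Set (Set (X × X))} {M : Type v} [MetricSpace M]

lemma update_const_mem_soSet (hcs : IsCoarseStructure 𝓔) (x : X) (m₀ m₁ : M) :
    Function.update (fun _ => m₀) x m₁ ∈ soSet 𝓔 M := by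
  refine ⟨((finite_singleton m₀).insert m₁).isBounded.subset ?_, fun ε hε E hE => ?_⟩
  · rintro - ⟨y, rfl⟩
    by_cases hy : y = x
    · simp [hy]
    · simp [Function.update_of_ne hy]
  refine ⟨entBall (entInv E) x, ⟨entInv E, hcs.inv_mem hE, x, subset_rfl⟩, fun y hy => ?_⟩
  have hconst : (Function.update (fun _ => m₀) x m₁ '' entBall E y).Subsingleton := by
    rintro - ⟨a, ha, rfl⟩ - ⟨b, hb, rfl⟩
    rw [Function.update_of_ne (by rintro rfl; exact hy ha),
      Function.update_of_ne (by rintro rfl; exact hy hb)]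
  exact (Metric.ediam_subsingleton hconst).trans_lt (ENNReal.ofReal_pos.2 hε)

lemma deltaEmb_injective [Nontrivial M] (hcs : IsCoarseStructure 𝓔) :
    Function.Injective (deltaEmb 𝓔 M) := by
  intro x y hxy
  by_contra hne
  obtain ⟨m₀, m₁, hm⟩ := exists_pair_ne M
  have := congrArg (fun g : HComp 𝓔 M => g.1 ⟨_, update_const_mem_soSet hcs x m₀ m₁⟩) hxy
  exact hm (by simpa [deltaEmb, deltaMap, Function.update_of_ne (Ne.symm hne)] using this.symm)

lemma denseRange_deltaEmb : DenseRange (deltaEmb 𝓔 M) :=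
  Subtype.dense_iff.2 (by rw [← range_comp]; exact subset_rfl)

lemma isOpen_singleton_deltaEmb [Nontrivial M] (hcs : IsCoarseStructure 𝓔) (x : X) :
    IsOpen ({deltaEmb 𝓔 M x} : Set (HComp 𝓔 M)) := by
  obtain ⟨m₀, m₁, hm⟩ := exists_pair_ne M
  let f : soSet 𝓔 M := ⟨_, update_const_mem_soSet hcs x m₀ m₁⟩
  have hopen : IsOpen {u : soSet 𝓔 M → M | u f ≠ m₀} :=
    isOpen_compl_singleton.preimage (continuous_apply f)
  -- `f` takes the value `m₀` at every `δ y` with `y ≠ x`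
  suffices {g : HComp 𝓔 M | g.1 f ≠ m₀} = {deltaEmb 𝓔 M x} from
    this ▸ hopen.preimage continuous_subtype_val
  refine Subset.antisymm (fun g hg => ?_) ?_
  · have hsub : {u : soSet 𝓔 M → M | u f ≠ m₀} ∩ range (deltaMap 𝓔 M) ⊆ {deltaMap 𝓔 M x} := by
      rintro - ⟨hu, y, rfl⟩
      obtain rfl | hyx := eq_or_ne y x
      · rfl
      · exact (hu (by simp [f, deltaMap, hyx])).elim
    have := closure_mono hsub (hopen.inter_closure ⟨hg, g.2⟩)
    rw [closure_singleton] at this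
    exact Subtype.ext this
  · rintro - rfl
    simpa [deltaEmb, deltaMap, f] using hm.symm

lemma isolatedPoints_hComp [Nontrivial M] (hcs : IsCoarseStructure 𝓔) :
    isolatedPoints (HComp 𝓔 M) = range (deltaEmb 𝓔 M) := by
  refine Subset.antisymm (fun w hw => ?_) (range_subset_iff.2 (isOpen_singleton_deltaEmb hcs))
  obtain ⟨_, hmem, hrange⟩ :=
    denseRange_deltaEmb.inter_open_nonempty {w} hw (singleton_nonempty w)
  exact mem_singleton_iff.1 hmem ▸ hrange

variable (M) in
noncomputable def isolatedPointsEquiv [Nontrivial M] (hcs : IsCoarseStructure 𝓔) :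
    X ≃ isolatedPoints (HComp 𝓔 M) :=
  (Equiv.ofInjective _ (deltaEmb_injective hcs)).trans
    (Equiv.setCongr (isolatedPoints_hComp hcs).symm)

@[simp]
lemma coe_isolatedPointsEquiv [Nontrivial M] (hcs : IsCoarseStructure 𝓔) (x : X) :
    (isolatedPointsEquiv M hcs x : HComp 𝓔 M) = deltaEmb 𝓔 M x :=
  rfl

variable (𝓔 M) in
noncomputable def liftToHComp (σ : X → X) (w : HComp 𝓔 M) : HComp 𝓔 M :=
  if hw : w ∈ range (deltaEmb 𝓔 M) then deltaEmb 𝓔 M (σ hw.choose) else w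

lemma liftToHComp_deltaEmb [Nontrivial M] (hcs : IsCoarseStructure 𝓔) (σ : X → X) (x : X) :
    liftToHComp 𝓔 M σ (deltaEmb 𝓔 M x) = deltaEmb 𝓔 M (σ x) := by
  have hx : deltaEmb 𝓔 M x ∈ range (deltaEmb 𝓔 M) := mem_range_self x
  rw [liftToHComp, dif_pos hx, deltaEmb_injective hcs hx.choose_spec]

lemma liftToHComp_of_notMem (σ : X → X) {w : HComp 𝓔 M} (hw : w ∉ range (deltaEmb 𝓔 M)) :
    liftToHComp 𝓔 M σ w = w :=
  dif_neg hw

lemma leftInverse_liftToHComp [Nontrivial M] (hcs : IsCoarseStructure 𝓔) {σ τ : X → X}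
    (h : Function.LeftInverse τ σ) :
    Function.LeftInverse (liftToHComp 𝓔 M τ) (liftToHComp 𝓔 M σ) := by
  intro w
  by_cases hw : w ∈ range (deltaEmb 𝓔 M)
  · obtain ⟨x, rfl⟩ := hw
    rw [liftToHComp_deltaEmb hcs, liftToHComp_deltaEmb hcs, h]
  · rw [liftToHComp_of_notMem σ hw, liftToHComp_of_notMem τ hw]

lemma continuousAt_liftToHComp_of_notMem [Nontrivial M] (hcs : IsCoarseStructure 𝓔)
    (hfin : IsFinitaryCoarse 𝓔) {σ : X → X} {G : Set (X × X)} (hG : G ∈ 𝓔)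
    (hσ : ∀ x, (x, σ x) ∈ G) {w : HComp 𝓔 M} (hw : w ∉ range (deltaEmb 𝓔 M)) :
    ContinuousAt (liftToHComp 𝓔 M σ) w := by
  rw [ContinuousAt, liftToHComp_of_notMem σ hw, tendsto_subtype_rng, tendsto_pi_nhds]
  intro f
  rw [Metric.tendsto_nhds]
  intro ε hε
  obtain ⟨B, hBfin, hB⟩ := f.2.2.exists_finite_dist_lt hcs hfin hG (half_pos hε)
  have hnear : ∀ᶠ u in 𝓝 w, dist (u.1 f) (w.1 f) < ε / 2 :=
    Metric.tendsto_nhds.1 (((continuous_apply f).comp continuous_subtype_val).tendsto w)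
      (ε / 2) (half_pos hε)
  -- near a corona point, `σ` only acts on points outside the finite set `B`
  have hfar : ∀ᶠ u in 𝓝 w, u ∉ deltaEmb 𝓔 M '' B :=
    (hBfin.image _).isClosed.isOpen_compl.mem_nhds fun h => hw (image_subset_range _ _ h)
  filter_upwards [hnear, hfar] with u hnear hfar
  by_cases hu : u ∈ range (deltaEmb 𝓔 M)
  · obtain ⟨x, rfl⟩ := hu
    rw [liftToHComp_deltaEmb hcs]
    calc dist (f.1 (σ x)) (w.1 f) ≤ dist (f.1 (σ x)) (f.1 x) + dist (f.1 x) (w.1 f) :=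
          dist_triangle _ _ _
      _ < ε / 2 + ε / 2 :=
          add_lt_add (hB x (fun hx => hfar (mem_image_of_mem _ hx)) _ (hσ x)) hnear
      _ = ε := add_halves ε
  · rw [liftToHComp_of_notMem σ hu]
    exact hnear.trans (half_lt_self hε)

lemma continuous_liftToHComp [Nontrivial M] (hcs : IsCoarseStructure 𝓔)
    (hfin : IsFinitaryCoarse 𝓔) {σ : X → X} {G : Set (X × X)} (hG : G ∈ 𝓔)
    (hσ : ∀ x, (x, σ x) ∈ G) : Continuous (liftToHComp 𝓔 M σ) := by
  refine continuous_iff_continuousAt.2 fun w => ?_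
  by_cases hw : w ∈ range (deltaEmb 𝓔 M)
  · obtain ⟨x, rfl⟩ := hw
    rw [ContinuousAt, (isOpen_singleton_iff_nhds_eq_pure _).1 (isOpen_singleton_deltaEmb hcs x)]
    exact tendsto_pure_nhds _ _
  · exact continuousAt_liftToHComp_of_notMem hcs hfin hG hσ hw

lemma mem_hPermGroup [Nontrivial M] (hcs : IsCoarseStructure 𝓔) (hfin : IsFinitaryCoarse 𝓔)
    {σ : Equiv.Perm X} {G : Set (X × X)} (hG : G ∈ 𝓔) (hσ : ∀ x, (x, σ x) ∈ G) :
    σ ∈ hPermGroup 𝓔 M := by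
  have hσ_symm : ∀ x, (x, σ.symm x) ∈ entInv G := fun x => by simpa [entInv] using hσ (σ.symm x)
  refine ⟨⟨⟨liftToHComp 𝓔 M σ, liftToHComp 𝓔 M σ.symm, leftInverse_liftToHComp hcs σ.left_inv,
      leftInverse_liftToHComp hcs σ.right_inv⟩, continuous_liftToHComp hcs hfin hG hσ,
      continuous_liftToHComp hcs hfin (hcs.inv_mem hG) hσ_symm⟩,
    fun _ hz => liftToHComp_of_notMem σ hz, liftToHComp_deltaEmb hcs σ⟩

lemma permCongr_mem_homeoPerms [Nontrivial M] (hcs : IsCoarseStructure 𝓔) {σ : Equiv.Perm X}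
    (hσ : σ ∈ hPermGroup 𝓔 M) : (isolatedPointsEquiv M hcs).permCongr σ ∈ homeoPerms (HComp 𝓔 M) := by
  obtain ⟨h, hfix, hδ⟩ := hσ
  refine ⟨h, fun z hz => hfix z (by rwa [← isolatedPoints_hComp hcs]), fun x => ?_⟩
  obtain ⟨x, rfl⟩ := (isolatedPointsEquiv M hcs).surjective x
  simp [hδ]

end Compactification

section Oscillation

variable {M : Type v} [MetricSpace M]

lemma oscAt_le_ediam {K : Type w} [TopologicalSpace K] (φ : isolatedPoints K → M) {z : K}
    {O : Set K} (hO : IsOpen O) (hz : z ∈ O) :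
    oscAt φ z ≤ Metric.ediam (φ '' (Subtype.val ⁻¹' O)) :=
  iInf_le_of_le O (iInf_le_of_le hO (iInf_le _ hz))

lemma oscAt_eq_zero_of_mem_ucSet {K : Type w} [TopologicalSpace K] {φ : isolatedPoints K → M}
    (hφ : φ ∈ ucSet K M) (z : K) : oscAt φ z = 0 := by
  obtain ⟨f, hf, hfφ⟩ := hφ
  refine nonpos_iff_eq_zero.1 (ENNReal.le_of_forall_pos_le_add fun ε hε _ => ?_)
  let r : ENNReal := ε / 2
  have hr : 0 < r := ENNReal.half_pos (ENNReal.coe_ne_zero.2 hε.ne')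
  have himage : φ '' (Subtype.val ⁻¹' (f ⁻¹' Metric.eball (f z) r)) ⊆ Metric.eball (f z) r := by
    rintro - ⟨x, hx, rfl⟩
    exact hfφ x ▸ hx
  calc oscAt φ z ≤ Metric.ediam (Metric.eball (f z) r) :=
        (oscAt_le_ediam φ (Metric.isOpen_eball.preimage hf) (Metric.mem_eball_self hr)).trans
          (Metric.ediam_mono himage)
    _ ≤ 2 * r := Metric.ediam_eball_le
    _ = 0 + ε := by rw [zero_add, ENNReal.mul_div_cancel two_ne_zero ENNReal.ofNat_ne_top]

lemma mem_ucSet_of_slowlyOscillating {X : Type u} {𝓔 : Set (Set (X × X))} [Nontrivial M]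
    (hcs : IsCoarseStructure 𝓔) {φ : isolatedPoints (HComp 𝓔 M) → M}
    (hφ : Bornology.IsBounded (range φ))
    (hso : SlowlyOscillating 𝓔 (φ ∘ isolatedPointsEquiv M hcs)) :
    φ ∈ ucSet (HComp 𝓔 M) M := by
  let f : soSet 𝓔 M := ⟨φ ∘ isolatedPointsEquiv M hcs, hφ.subset (range_comp_subset_range _ _), hso⟩
  refine ⟨fun g => g.1 f, (continuous_apply f).comp continuous_subtype_val, fun x => ?_⟩
  obtain ⟨x, rfl⟩ := (isolatedPointsEquiv M hcs).surjective x
  rfl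

end Oscillation

lemma exists_injective_pairs {α : Type*} {P : α → α → Prop}
    (h : ∀ F : Finset α, ∃ a b, a ∉ F ∧ b ∉ F ∧ a ≠ b ∧ P a b) :
    ∃ ι : ℕ ⊕ ℕ → α, Function.Injective ι ∧ ∀ n, P (ι (.inl n)) (ι (.inr n)) := by
  classical
  choose a b ha hb hab hP using h
  -- `S n` collects the first `n` pairs; the next pair is chosen outside it
  let S : ℕ → Finset α := fun n => Nat.rec ∅ (fun _ F => insert (a F) (insert (b F) F)) n
  let ι : ℕ ⊕ ℕ → α := Sum.elim (fun n => a (S n)) (fun n => b (S n))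
  let idx : ℕ ⊕ ℕ → ℕ := Sum.elim id id
  have hmono : Monotone S := monotone_nat_of_le_succ fun n =>
    (Finset.subset_insert _ _).trans (Finset.subset_insert _ _)
  have hnew : ∀ c, ι c ∉ S (idx c) := by rintro (n | n); exacts [ha _, hb _]
  have hold : ∀ c, ι c ∈ S (idx c + 1) := by rintro (n | n) <;> simp [ι, idx, S]
  have hmem : ∀ c n, ι c ∈ S n ↔ idx c < n := fun c n =>
    ⟨fun h => not_le.1 fun hle => hnew c (hmono hle h), fun h => hmono h (hold c)⟩
  refine ⟨ι, fun c d h => ?_, fun n => hP _⟩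
  have hcd : idx c = idx d := by
    have h₁ := (hmem d (idx c + 1)).1 (h ▸ hold c)
    have h₂ := (hmem c (idx d + 1)).1 (h ▸ hold d)
    omega
  rcases c with m | m <;> rcases d with n | n <;>
    simp only [idx, ι, Sum.elim_inl, Sum.elim_inr, id, Sum.inl.injEq, Sum.inr.injEq,
      reduceCtorEq] at hcd h ⊢
  all_goals subst hcd
  · rfl
  · exact hab _ h
  · exact hab _ h.symm
  · rfl

lemma exists_perm_of_pairs {α : Type*} {P : α → α → Prop}
    (h : ∀ F : Finset α, ∃ a b, a ∉ F ∧ b ∉ F ∧ a ≠ b ∧ P a b) :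
    ∃ σ : Equiv.Perm α, (∀ x, σ x = x ∨ P x (σ x) ∨ P (σ x) x) ∧ {x | P x (σ x)}.Infinite := by
  classical
  obtain ⟨ι, hι, hP⟩ := exists_injective_pairs h
  -- swap the two points of every pair, fix everything else
  let σ : Equiv.Perm α := Equiv.Perm.extendDomain (Equiv.sumComm ℕ ℕ) (Equiv.ofInjective ι hι)
  have hσ : ∀ c, σ (ι c) = ι c.swap := fun c => by
    simpa using Equiv.Perm.extendDomain_apply_image (Equiv.sumComm ℕ ℕ) (Equiv.ofInjective ι hι) c
  refine ⟨σ, fun x => ?_, (infinite_range_of_injective (hι.comp Sum.inl_injective)).mono ?_⟩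
  · by_cases hx : x ∈ range ι
    · obtain ⟨n | n, rfl⟩ := hx
      · exact Or.inr (Or.inl (by rw [hσ]; exact hP n))
      · exact Or.inr (Or.inr (by rw [hσ]; exact hP n))
    · exact Or.inl (Equiv.Perm.extendDomain_apply_not_subtype _ _ hx)
  · rintro - ⟨n, rfl⟩
    show P (ι (.inl n)) (σ (ι (.inl n)))
    rw [hσ]
    exact hP n

section NotSlowlyOscillating

variable {X : Type u} {𝓔 : Set (Set (X × X))} {M : Type v} [MetricSpace M]

lemma exists_separated_pairs [Nonempty X] (hcs : IsCoarseStructure 𝓔)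
    (hfin : IsFinitaryCoarse 𝓔) {ψ : X → M} (hψ : ¬ SlowlyOscillating 𝓔 ψ) :
    ∃ G ∈ 𝓔, ∃ ε > 0, ∀ F : Finset X,
      ∃ a b, a ∉ F ∧ b ∉ F ∧ (a, b) ∈ G ∧ ε < dist (ψ a) (ψ b) := by
  simp only [SlowlyOscillating, not_forall, not_exists, not_and, not_lt] at hψ
  obtain ⟨ε, hε, E, hE, hT⟩ := hψ
  obtain ⟨G, hG, hEG⟩ := hcs.exists_entComp_subset (hcs.inv_mem hE) hE
  obtain ⟨n, hn⟩ := hfin _ (hcs.inv_mem hE)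
  refine ⟨G, hG, ε / 2, half_pos hε, fun F => ?_⟩
  have hF : IsBoundedSet 𝓔 (⋃ y ∈ F, entBall (entInv E) y) :=
    hcs.isBoundedSet_of_finite (F.finite_toSet.biUnion fun y _ => (hn y).1)
  obtain ⟨x, hxF, hdiam⟩ := hT _ hF
  have hlt : ENNReal.ofReal (ε / 2) < Metric.ediam (ψ '' entBall E x) :=
    ((ENNReal.ofReal_lt_ofReal_iff hε).2 (half_lt_self hε)).trans_le hdiam
  obtain ⟨a, ha, b, hb, hab⟩ :
      ∃ a ∈ entBall E x, ∃ b ∈ entBall E x, ENNReal.ofReal (ε / 2) < edist (ψ a) (ψ b) := by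
    by_contra! h
    exact hlt.not_ge (Metric.ediam_image_le_iff.2 h)
  refine ⟨a, b, fun haF => hxF (mem_biUnion haF ha), fun hbF => hxF (mem_biUnion hbF hb),
    hEG ⟨x, ha, hb⟩, ?_⟩
  rwa [edist_dist, ENNReal.ofReal_lt_ofReal_iff_of_nonneg (half_pos hε).le] at hab

lemma exists_mem_hPermGroup_of_not_slowlyOscillating [Nonempty X] [Nontrivial M]
    (hcs : IsCoarseStructure 𝓔) (hfin : IsFinitaryCoarse 𝓔) {ψ : X → M}
    (hψ : ¬ SlowlyOscillating 𝓔 ψ) :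
    ∃ σ ∈ hPermGroup 𝓔 M, ∃ ε > 0, {x | ε < dist (ψ (σ x)) (ψ x)}.Infinite := by
  obtain ⟨G, hG, ε, hε, hpairs⟩ := exists_separated_pairs hcs hfin hψ
  obtain ⟨σ, hσG, hσfar⟩ :=
    exists_perm_of_pairs (P := fun a b => (a, b) ∈ G ∧ ε < dist (ψ a) (ψ b)) fun F => by
      obtain ⟨a, b, ha, hb, hG, hd⟩ := hpairs F
      exact ⟨a, b, ha, hb, fun hab => by simp [hab] at hd; linarith, hG, hd⟩
  obtain ⟨G', hG', hGG'⟩ := hcs.exists_union_subset hG (hcs.inv_mem hG)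
  refine ⟨σ, mem_hPermGroup hcs hfin hG' fun x => ?_, ε, hε,
    hσfar.mono fun x hx => hx.2.trans_eq (dist_comm _ _)⟩
  rcases hσG x with h | h | h
  · rw [h]
    exact hGG' (Or.inl (hcs.ent G hG x))
  · exact hGG' (Or.inl h.1)
  · exact hGG' (Or.inr h.1)

end NotSlowlyOscillating

theorem statement4_general {X : Type u} (M : Type v) [MetricSpace M] [Nontrivial M]
    (𝓔 : Set (Set (X × X))) (hcs : IsCoarseStructure 𝓔) (hfin : IsFinitaryCoarse 𝓔) :
    IsMSoft (HComp 𝓔 M) M := by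
  intro φ hφ ⟨z, hz⟩
  have : Nonempty X := denseRange_deltaEmb.nonempty_iff.2 ⟨z⟩
  let e := isolatedPointsEquiv M hcs
  have hso : ¬ SlowlyOscillating 𝓔 (φ ∘ e) := fun h =>
    hz.ne' (oscAt_eq_zero_of_mem_ucSet (mem_ucSet_of_slowlyOscillating hcs hφ h) z)
  obtain ⟨σ, hσ, ε, hε, hfar⟩ := exists_mem_hPermGroup_of_not_slowlyOscillating hcs hfin hso
  refine ⟨e.permCongr σ, permCongr_mem_homeoPerms hcs hσ, ε, hε,
    (hfar.image e.injective.injOn).mono ?_⟩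
  rintro - ⟨x, hx, rfl⟩
  simpa using hx.le

/-- The `M`-compactification of any finitary coarse space is `M`-soft. -/
theorem statement4 {X : Type u} (M : Type v) [MetricSpace M] [ProperSpace M] [Nontrivial M]
    (𝓔 : Set (Set (X × X))) (hcs : IsCoarseStructure 𝓔) (hfin : IsFinitaryCoarse 𝓔) :
    IsMSoft (HComp 𝓔 M) M :=
  statement4_general M 𝓔 hcs hfin
end
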